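/- Every linear projection P from ℓ₁(E(D_n)) onto the cycle space Z(D_n) of the binary diamond graph D_n satisfies ‖P‖ ≥ (2n+1)/3. -/

import Mathlib

open Finset

/-- Edge set of the `n`-th binary diamond graph: each edge spawns 4 edges. -/
def DE : ℕ → Type
  | 0 => Unit
  | n + 1 => DE n × Fin 4

/-- Vertex set of the `n`-th binary diamond graph: two new vertices per old edge. -/
def DV : ℕ → Type
  | 0 => Fin 2
  | n + 1 => DV n ⊕ DE n × Fin 2

def deDecEq : ∀ n, DecidableEq (DE n)
  | 0 => inferInstanceAs (DecidableEq Unit)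
  | n + 1 => letI := deDecEq n; inferInstanceAs (DecidableEq (DE n × Fin 4))

instance (n : ℕ) : DecidableEq (DE n) := deDecEq n

def deFintype : ∀ n, Fintype (DE n)
  | 0 => inferInstanceAs (Fintype Unit)
  | n + 1 => letI := deFintype n; inferInstanceAs (Fintype (DE n × Fin 4))

instance (n : ℕ) : Fintype (DE n) := deFintype n

def dvDecEq : ∀ n, DecidableEq (DV n)
  | 0 => inferInstanceAs (DecidableEq (Fin 2))
  | n + 1 => letI := dvDecEq n; letI := deDecEq n
              inferInstanceAs (DecidableEq (DV n ⊕ DE n × Fin 2))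

instance (n : ℕ) : DecidableEq (DV n) := dvDecEq n

def dvFintype : ∀ n, Fintype (DV n)
  | 0 => inferInstanceAs (Fintype (Fin 2))
  | n + 1 => letI := dvFintype n; letI := deFintype n
              inferInstanceAs (Fintype (DV n ⊕ DE n × Fin 2))

instance (n : ℕ) : Fintype (DV n) := dvFintype n

/-- Endpoints of the edges of the diamond graph `D_n`; each edge `e = (u,v)`
(`u` the endpoint nearer the top) of `D_{n-1}` is replaced by the quadrilateral
`u, a, v, b` with edges `u a`, `a v`, `b v`, `u b`, each oriented downwards
(first coordinate nearer the top). `D_0` is a single edge `(0,1)` (`0` the top). -/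
def ends : ∀ n, DE n → DV n × DV n
  | 0, _ => ((0 : Fin 2), (1 : Fin 2))
  | n + 1, (e, i) =>
      let u : DV (n + 1) := Sum.inl (ends n e).1
      let v : DV (n + 1) := Sum.inl (ends n e).2
      let a : DV (n + 1) := Sum.inr (e, (0 : Fin 2))
      let b : DV (n + 1) := Sum.inr (e, (1 : Fin 2))
      if i.val = 0 then (u, a)
      else if i.val = 1 then (a, v)
      else if i.val = 2 then (b, v)
      else (u, b)

/-- The `n`-th binary diamond graph `D_n` (as an undirected simple graph). -/
def DG (n : ℕ) : SimpleGraph (DV n) where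
  Adj x y := x ≠ y ∧ ∃ e : DE n, ends n e = (x, y) ∨ ends n e = (y, x)
  symm := by
    constructor
    intro x y h
    obtain ⟨hxy, e, he⟩ := h
    exact ⟨hxy.symm, e, he.symm⟩
  loopless := by
    constructor
    intro x h
    exact h.1 rfl

/-- The cycle space `Z(D_n)` of the diamond graph: the space of circulations, i.e. the
kernel of the boundary operator. Over `ℝ` this is exactly the linear span of the signed
indicator functions of the cycles of `D_n` (w.r.t. the orientation given by `ends`). -/
def cycleSpace (n : ℕ) : Submodule ℝ (DE n → ℝ) where
  carrier := {f | ∀ v : DV n,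
    ∑ e : DE n, f e * ((if (ends n e).2 = v then (1 : ℝ) else 0) -
      (if (ends n e).1 = v then (1 : ℝ) else 0)) = 0}
  add_mem' := by
    intro a b ha hb
    intro v
    simp only [Pi.add_apply, add_mul]
    rw [Finset.sum_add_distrib, ha v, hb v]
    ring
  zero_mem' := by
    intro v
    simp
  smul_mem' := by
    intro c a ha
    intro v
    simp only [Pi.smul_apply, smul_eq_mul, mul_assoc]
    rw [← Finset.mul_sum, ha v, mul_zero]

/-- The `ℓ₁(E(D_n))` norm on the edge space. -/
def e1norm {n : ℕ} (f : DE n → ℝ) : ℝ := ∑ e, |f e|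

/-!
The cycle space is spanned by the even Haar functions `evenHaar` (one signed 4-cycle for every
edge of every `D_k`, `k < n`); with the constants and the odd Haar functions `oddHaar` they form
an orthogonal basis of the edge space. The edge permutations `flipEquiv s` send every Haar
function to `±` a Haar function of the same kind. If `M` is the matrix of a projection onto the
cycle space with `ℓ₁`-norm `≤ K`, pairing `testFn` (bounded by `1`) with the column at
`baseEdge` of `M` conjugated by a flip gives a number `≤ K`. Averaged over all flips, the
contribution of `M - Q`, with `Q` the orthogonal projection, cancels through sign-reversing
involutions of the flips, and what remains is `⟨testFn, Q δ_baseEdge⟩ = 2n/3 + 4/9 - 4^(1-n)/9`,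
which is `≥ (2n+1)/3` for `n ≥ 1`.
-/

open Matrix

namespace DiamondGraph

section Digits

def digitSide : Fin 4 → Bool := ![false, false, true, true]
def digitPos : Fin 4 → Bool := ![false, true, false, true]
def mkDigit (a b : Bool) : Fin 4 := if a then (if b then 3 else 2) else (if b then 1 else 0)

-- On the edges `(e, 0), (e, 1), (e, 2), (e, 3)` = `u a, a v, b v, u b` replacing `e = u v`:
-- `quadPattern` is the signed indicator of the cycle `u a v b u`, `sidePattern false` and
-- `sidePattern true` are the differences of the two edges of the sides `u a v` and `u b v`.
def quadPattern : Fin 4 → ℝ := ![1, 1, -1, -1]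
def sidePattern (β : Bool) : Fin 4 → ℝ := if β then ![0, 0, 1, -1] else ![1, -1, 0, 0]

def boolSign (b : Bool) : ℝ := if b then -1 else 1

lemma boolSign_mul_self (b : Bool) : boolSign b * boolSign b = 1 := by
  cases b <;> norm_num [boolSign]

lemma boolSign_not (b : Bool) : boolSign (!b) = -boolSign b := by
  cases b <;> norm_num [boolSign]

def digitPerm (a : Bool) (c : Bool → Bool) : Equiv.Perm (Fin 4) where
  toFun i := mkDigit (xor (digitSide i) a) (xor (digitPos i) (c (digitSide i)))
  invFun i := mkDigit (xor (digitSide i) a) (xor (digitPos i) (c (xor (digitSide i) a)))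
  left_inv i := by
    cases a <;> cases h0 : c false <;> cases h1 : c true <;> fin_cases i <;>
      simp [mkDigit, digitSide, digitPos, h0, h1]
  right_inv i := by
    cases a <;> cases h0 : c false <;> cases h1 : c true <;> fin_cases i <;>
      simp [mkDigit, digitSide, digitPos, h0, h1]

lemma quadPattern_digitPerm_symm (a : Bool) (c : Bool → Bool) (i : Fin 4) :
    quadPattern ((digitPerm a c).symm i) = boolSign a * quadPattern i := by
  cases a <;> cases h0 : c false <;> cases h1 : c true <;> fin_cases i <;>
    simp [digitPerm, quadPattern, mkDigit, digitSide, digitPos, boolSign, h0, h1]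

lemma sidePattern_digitPerm_symm (a : Bool) (c : Bool → Bool) (β : Bool) (i : Fin 4) :
    sidePattern β ((digitPerm a c).symm i) = boolSign (c β) * sidePattern (xor β a) i := by
  cases a <;> cases β <;> cases h0 : c false <;> cases h1 : c true <;> fin_cases i <;>
    simp [digitPerm, sidePattern, mkDigit, digitSide, digitPos, boolSign, h0, h1]

lemma fin4_expansion (r : Fin 4 → ℝ) (i : Fin 4) :
    r i = (∑ j, r j) / 4 + (∑ j, r j * quadPattern j) / 4 * quadPattern i
      + ∑ β, (∑ j, r j * sidePattern β j) / 2 * sidePattern β i := by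
  fin_cases i <;> simp [Fin.sum_univ_four, quadPattern, sidePattern] <;> ring

end Digits

section Haar

def EvenIdx : ℕ → Type
  | 0 => Empty
  | n + 1 => EvenIdx n ⊕ DE n

def OddIdx : ℕ → Type
  | 0 => Empty
  | n + 1 => OddIdx n ⊕ DE n × Bool

instance instFintypeEvenIdx : (n : ℕ) → Fintype (EvenIdx n)
  | 0 => inferInstanceAs (Fintype Empty)
  | n + 1 => letI := instFintypeEvenIdx n; inferInstanceAs (Fintype (EvenIdx n ⊕ DE n))

instance instFintypeOddIdx : (n : ℕ) → Fintype (OddIdx n)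
  | 0 => inferInstanceAs (Fintype Empty)
  | n + 1 => letI := instFintypeOddIdx n; inferInstanceAs (Fintype (OddIdx n ⊕ DE n × Bool))

def evenHaar : (n : ℕ) → EvenIdx n → DE n → ℝ
  | 0, v, _ => v.elim
  | n + 1, .inl v, x => evenHaar n v x.1
  | _ + 1, .inr v, x => if x.1 = v then quadPattern x.2 else 0

def oddHaar : (n : ℕ) → OddIdx n → DE n → ℝ
  | 0, u, _ => u.elim
  | n + 1, .inl u, x => oddHaar n u x.1
  | _ + 1, .inr w, x => if x.1 = w.1 then sidePattern w.2 x.2 else 0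

def evenNormSq : (n : ℕ) → EvenIdx n → ℝ
  | 0, v => v.elim
  | n + 1, .inl v => 4 * evenNormSq n v
  | _ + 1, .inr _ => 4

def oddNormSq : (n : ℕ) → OddIdx n → ℝ
  | 0, u => u.elim
  | n + 1, .inl u => 4 * oddNormSq n u
  | _ + 1, .inr _ => 2

variable {n : ℕ}

lemma evenHaar_succ_inl (v : EvenIdx n) (x : DE n) (i : Fin 4) :
    evenHaar (n + 1) (.inl v) (x, i) = evenHaar n v x :=
  rfl

lemma evenHaar_succ_inr (v x : DE n) (i : Fin 4) :
    evenHaar (n + 1) (.inr v) (x, i) = if x = v then quadPattern i else 0 :=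
  rfl

lemma oddHaar_succ_inl (u : OddIdx n) (x : DE n) (i : Fin 4) :
    oddHaar (n + 1) (.inl u) (x, i) = oddHaar n u x :=
  rfl

lemma oddHaar_succ_inr (v : DE n) (β : Bool) (x : DE n) (i : Fin 4) :
    oddHaar (n + 1) (.inr (v, β)) (x, i) = if x = v then sidePattern β i else 0 :=
  rfl

lemma sum_DE_succ {M : Type*} [AddCommMonoid M] (F : DE (n + 1) → M) : ∑ x, F x = ∑ y : DE n, ∑ i, F (y, i) :=
  Fintype.sum_prod_type F

lemma sum_evenIdx_succ {M : Type*} [AddCommMonoid M] (F : EvenIdx (n + 1) → M) :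
    ∑ v, F v = ∑ v, F (.inl v) + ∑ v : DE n, F (.inr v) :=
  Fintype.sum_sum_type F

lemma sum_oddIdx_succ {M : Type*} [AddCommMonoid M] (F : OddIdx (n + 1) → M) :
    ∑ u, F u = ∑ u, F (.inl u) + ∑ w : DE n × Bool, F (.inr w) :=
  Fintype.sum_sum_type F

lemma dotProduct_comp_fst (w : DE (n + 1) → ℝ) (g : DE n → ℝ) :
    w ⬝ᵥ (fun x : DE (n + 1) => g x.1) = (fun y => ∑ i, w (y, i)) ⬝ᵥ g := by
  simp only [dotProduct, sum_DE_succ, Finset.sum_mul]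

lemma dotProduct_block (w : DE (n + 1) → ℝ) (v : DE n) (p : Fin 4 → ℝ) :
    w ⬝ᵥ (fun x : DE (n + 1) => if x.1 = v then p x.2 else 0) = ∑ i, w (v, i) * p i := by
  simp only [dotProduct, sum_DE_succ, mul_ite, mul_zero]
  rw [Finset.sum_eq_single v (fun y _ hy => by simp [hy]) (by simp)]
  simp

lemma dotProduct_evenHaar_inl (w : DE (n + 1) → ℝ) (v : EvenIdx n) :
    w ⬝ᵥ evenHaar (n + 1) (.inl v) = (fun y => ∑ i, w (y, i)) ⬝ᵥ evenHaar n v :=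
  dotProduct_comp_fst w _

lemma dotProduct_evenHaar_inr (w : DE (n + 1) → ℝ) (v : DE n) :
    w ⬝ᵥ evenHaar (n + 1) (.inr v) = ∑ i, w (v, i) * quadPattern i :=
  dotProduct_block w v _

lemma dotProduct_oddHaar_inl (w : DE (n + 1) → ℝ) (u : OddIdx n) :
    w ⬝ᵥ oddHaar (n + 1) (.inl u) = (fun y => ∑ i, w (y, i)) ⬝ᵥ oddHaar n u :=
  dotProduct_comp_fst w _

lemma dotProduct_oddHaar_inr (w : DE (n + 1) → ℝ) (v : DE n) (β : Bool) :
    w ⬝ᵥ oddHaar (n + 1) (.inr (v, β)) = ∑ i, w (v, i) * sidePattern β i :=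
  dotProduct_block w v _

noncomputable def coarsen (w : DE (n + 1) → ℝ) : DE n → ℝ := fun y => (∑ i, w (y, i)) / 4

lemma sum_fiber_eq_four_smul_coarsen (w : DE (n + 1) → ℝ) :
    (fun y => ∑ i, w (y, i)) = (4 : ℝ) • coarsen w := by
  ext y; simp only [coarsen, Pi.smul_apply, smul_eq_mul]; ring

noncomputable def evenPart (n : ℕ) (w : DE n → ℝ) (x : DE n) : ℝ :=
  ∑ v, (w ⬝ᵥ evenHaar n v) / evenNormSq n v * evenHaar n v x

noncomputable def oddPart (n : ℕ) (w : DE n → ℝ) (x : DE n) : ℝ :=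
  ∑ u, (w ⬝ᵥ oddHaar n u) / oddNormSq n u * oddHaar n u x

lemma evenPart_succ (w : DE (n + 1) → ℝ) (y : DE n) (i : Fin 4) :
    evenPart (n + 1) w (y, i) =
      evenPart n (coarsen w) y + (∑ j, w (y, j) * quadPattern j) / 4 * quadPattern i := by
  unfold evenPart
  rw [sum_evenIdx_succ]
  congr 1
  · refine Finset.sum_congr rfl fun v _ => ?_
    rw [dotProduct_evenHaar_inl, sum_fiber_eq_four_smul_coarsen, smul_dotProduct, smul_eq_mul]
    simp only [evenNormSq, evenHaar_succ_inl]
    rw [mul_div_mul_left _ _ four_ne_zero]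
  · simp only [dotProduct_evenHaar_inr, evenHaar_succ_inr, evenNormSq, mul_ite, mul_zero]
    rw [Finset.sum_ite_eq]
    simp

lemma oddPart_succ (w : DE (n + 1) → ℝ) (y : DE n) (i : Fin 4) :
    oddPart (n + 1) w (y, i) =
      oddPart n (coarsen w) y +
        ∑ β, (∑ j, w (y, j) * sidePattern β j) / 2 * sidePattern β i := by
  unfold oddPart
  rw [sum_oddIdx_succ]
  congr 1
  · refine Finset.sum_congr rfl fun u _ => ?_
    rw [dotProduct_oddHaar_inl, sum_fiber_eq_four_smul_coarsen, smul_dotProduct, smul_eq_mul]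
    simp only [oddNormSq, oddHaar_succ_inl]
    rw [mul_div_mul_left _ _ four_ne_zero]
  · rw [Fintype.sum_prod_type, Finset.sum_comm]
    refine Finset.sum_congr rfl fun β _ => ?_
    simp only [dotProduct_oddHaar_inr, oddHaar_succ_inr, oddNormSq, mul_ite, mul_zero]
    rw [Finset.sum_ite_eq]
    simp

theorem haar_expansion : ∀ (n : ℕ) (w : DE n → ℝ) (x : DE n),
    w x = (∑ y, w y) / 4 ^ n + evenPart n w x + oddPart n w x
  | 0, w, x => by
    have hx : (Finset.univ : Finset (DE 0)) = {x} := Finset.eq_singleton_iff_unique_mem.2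
      ⟨Finset.mem_univ x, fun y _ => Subsingleton.elim (α := Unit) y x⟩
    simp [hx, evenPart, oddPart, Finset.sum_eq_zero (fun (v : EvenIdx 0) _ => v.elim),
      Finset.sum_eq_zero (fun (u : OddIdx 0) _ => u.elim)]
  | n + 1, w, (y, i) => by
    have h_mean : (∑ x, w x) / 4 ^ (n + 1) = (∑ y, coarsen w y) / 4 ^ n := by
      simp only [sum_DE_succ, coarsen, pow_succ, ← Finset.sum_div]; ring
    have h_digits := fin4_expansion (fun j => w (y, j)) i
    have h_coarse := haar_expansion n (coarsen w) y
    rw [h_mean, evenPart_succ, oddPart_succ]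
    simp only [coarsen] at h_coarse ⊢
    linarith

end Haar

section CycleSpace

variable {n : ℕ}

def netInflow (n : ℕ) (f : DE n → ℝ) (x : DV n) : ℝ :=
  ∑ e, f e * ((if (ends n e).2 = x then 1 else 0) - (if (ends n e).1 = x then 1 else 0))

lemma mem_cycleSpace_iff {f : DE n → ℝ} : f ∈ cycleSpace n ↔ ∀ x, netInflow n f x = 0 :=
  Iff.rfl

@[simp] lemma inl_eq_inl_iff {a b : DV n} : @Eq (DV (n + 1)) (.inl a) (.inl b) ↔ a = b :=
  Sum.inl_injective.eq_iff

@[simp] lemma inr_eq_inr_iff {a b : DE n × Fin 2} : @Eq (DV (n + 1)) (.inr a) (.inr b) ↔ a = b :=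
  Sum.inr_injective.eq_iff

@[simp] lemma inr_eq_inl_iff {a : DV n} {b : DE n × Fin 2} :
    @Eq (DV (n + 1)) (.inr b) (.inl a) ↔ False :=
  iff_false_intro Sum.inr_ne_inl

lemma netInflow_succ_eq (f : DE (n + 1) → ℝ) (x : DV (n + 1)) :
    netInflow (n + 1) f x = ∑ e, (
      let u : DV (n + 1) := .inl (ends n e).1
      let v : DV (n + 1) := .inl (ends n e).2
      let a : DV (n + 1) := .inr (e, 0)
      let b : DV (n + 1) := .inr (e, 1)
      f (e, 0) * ((if a = x then 1 else 0) - (if u = x then 1 else 0))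
      + f (e, 1) * ((if v = x then 1 else 0) - (if a = x then 1 else 0))
      + f (e, 2) * ((if v = x then 1 else 0) - (if b = x then 1 else 0))
      + f (e, 3) * ((if b = x then 1 else 0) - (if u = x then 1 else 0))) := by
  rw [netInflow, sum_DE_succ]
  simp only [Fin.sum_univ_four]
  rfl

lemma netInflow_succ_inr_zero (f : DE (n + 1) → ℝ) (e : DE n) :
    netInflow (n + 1) f (Sum.inr (e, 0) : DV (n + 1)) = f (e, 0) - f (e, 1) := by
  rw [netInflow_succ_eq f (Sum.inr (e, 0)),
    Finset.sum_eq_single e (fun e' _ he' => by simp [he']) (by simp)]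
  simp [sub_eq_add_neg]

lemma netInflow_succ_inr_one (f : DE (n + 1) → ℝ) (e : DE n) :
    netInflow (n + 1) f (Sum.inr (e, 1) : DV (n + 1)) = f (e, 3) - f (e, 2) := by
  rw [netInflow_succ_eq f (Sum.inr (e, 1)),
    Finset.sum_eq_single e (fun e' _ he' => by simp [he']) (by simp)]
  simp [sub_eq_add_neg, add_comm]

lemma netInflow_succ_inl (f : DE (n + 1) → ℝ)
    (hf : ∀ e, f (e, 0) + f (e, 3) = f (e, 1) + f (e, 2)) (x : DV n) :
    netInflow (n + 1) f (Sum.inl x : DV (n + 1)) =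
      netInflow n (fun e => f (e, 1) + f (e, 2)) x := by
  rw [netInflow_succ_eq f (Sum.inl x), netInflow]
  refine Finset.sum_congr rfl fun e _ => ?_
  simp only [inl_eq_inl_iff, inr_eq_inl_iff, if_false]
  linear_combination -(if (ends n e).1 = x then (1 : ℝ) else 0) * hf e

theorem mem_cycleSpace_succ_iff {f : DE (n + 1) → ℝ} :
    f ∈ cycleSpace (n + 1) ↔ (∀ e, f (e, 0) = f (e, 1) ∧ f (e, 3) = f (e, 2)) ∧
      (fun e => f (e, 1) + f (e, 2)) ∈ cycleSpace n := by
  have balanced (h : ∀ e, f (e, 0) = f (e, 1) ∧ f (e, 3) = f (e, 2)) (e : DE n) :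
      f (e, 0) + f (e, 3) = f (e, 1) + f (e, 2) := by
    rw [(h e).1, (h e).2]
  simp only [mem_cycleSpace_iff]
  constructor
  · intro hf
    have hloc (e : DE n) : f (e, 0) = f (e, 1) ∧ f (e, 3) = f (e, 2) :=
      ⟨sub_eq_zero.1 ((netInflow_succ_inr_zero f e).symm.trans (hf _)),
        sub_eq_zero.1 ((netInflow_succ_inr_one f e).symm.trans (hf _))⟩
    exact ⟨hloc, fun x => (netInflow_succ_inl f (balanced hloc) x).symm.trans (hf _)⟩
  · rintro ⟨hloc, hbar⟩ (x | ⟨e, j⟩)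
    · exact (netInflow_succ_inl f (balanced hloc) x).trans (hbar x)
    · fin_cases j
      · exact (netInflow_succ_inr_zero f e).trans (sub_eq_zero.2 (hloc e).1)
      · exact (netInflow_succ_inr_one f e).trans (sub_eq_zero.2 (hloc e).2)

theorem sum_eq_zero_of_mem_cycleSpace :
    ∀ {n : ℕ} {z : DE n → ℝ}, z ∈ cycleSpace n → ∑ e, z e = 0
  | 0, z, hz => by
    have hne : (ends 0 ()).1 ≠ (ends 0 ()).2 := by decide
    have hends (e : DE 0) : ends 0 e = ends 0 () := rfl
    simpa [hends, hne] using hz (ends 0 ()).2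
  | n + 1, z, hz => by
    rw [mem_cycleSpace_succ_iff] at hz
    calc ∑ e, z e = ∑ e : DE n, 2 * (z (e, 1) + z (e, 2)) := by
          rw [sum_DE_succ]
          refine Finset.sum_congr rfl fun e _ => ?_
          rw [Fin.sum_univ_four, (hz.1 e).1, (hz.1 e).2]; ring
      _ = 0 := by rw [← Finset.mul_sum, sum_eq_zero_of_mem_cycleSpace hz.2, mul_zero]

theorem dotProduct_oddHaar_eq_zero_of_mem_cycleSpace :
    ∀ {n : ℕ} {z : DE n → ℝ}, z ∈ cycleSpace n → ∀ u, z ⬝ᵥ oddHaar n u = 0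
  | 0, _, _, u => u.elim
  | n + 1, z, hz, .inl u => by
    rw [mem_cycleSpace_succ_iff] at hz
    have hsum : (fun y => ∑ i, z (y, i)) = (2 : ℝ) • fun e => z (e, 1) + z (e, 2) := by
      ext e; simp only [Fin.sum_univ_four, (hz.1 e).1, (hz.1 e).2, Pi.smul_apply, smul_eq_mul]; ring
    rw [dotProduct_oddHaar_inl, hsum, smul_dotProduct,
      dotProduct_oddHaar_eq_zero_of_mem_cycleSpace hz.2 u, smul_zero]
  | n + 1, z, hz, .inr (v, β) => by
    rw [mem_cycleSpace_succ_iff] at hz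
    rw [dotProduct_oddHaar_inr, Fin.sum_univ_four]
    cases β <;> simp [sidePattern, (hz.1 v).1, (hz.1 v).2]

theorem evenHaar_mem_cycleSpace : ∀ (n : ℕ) (v : EvenIdx n), evenHaar n v ∈ cycleSpace n
  | 0, v => v.elim
  | n + 1, .inl v => mem_cycleSpace_succ_iff.2
      ⟨fun _ => ⟨rfl, rfl⟩,
        add_mem (evenHaar_mem_cycleSpace n v) (evenHaar_mem_cycleSpace n v)⟩
  | n + 1, .inr v => by
    refine mem_cycleSpace_succ_iff.2 ⟨fun e => ?_, ?_⟩
    · simp [evenHaar, quadPattern]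
    · have hzero : (fun e => evenHaar (n + 1) (.inr v) (e, 1) + evenHaar (n + 1) (.inr v) (e, 2))
          = 0 := by
        ext e
        by_cases he : e = v <;> simp [evenHaar, quadPattern, he]
      rw [hzero]
      exact zero_mem _

theorem eq_evenPart_of_mem_cycleSpace {z : DE n → ℝ} (hz : z ∈ cycleSpace n) (x : DE n) :
    z x = evenPart n z x := by
  rw [haar_expansion n z x, sum_eq_zero_of_mem_cycleSpace hz]
  simp [oddPart, dotProduct_oddHaar_eq_zero_of_mem_cycleSpace hz]

theorem eq_add_oddPart_of_orthogonal {J : DE n → ℝ} (hJ : ∀ v, J ⬝ᵥ evenHaar n v = 0)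
    (x : DE n) :
    J x = (∑ y, J y) / 4 ^ n + oddPart n J x := by
  rw [haar_expansion n J x]
  simp [evenPart, hJ]

end CycleSpace

section Symmetries

-- A flip of `D_(n+1)` consists of a flip of `D_n` and, for every edge of `D_n`, a bit that
-- exchanges the two sides of its diamond and a bit per side that exchanges the two edges of that
-- side (see `flipEquiv`).
def Flips : ℕ → Type
  | 0 => Unit
  | n + 1 => Flips n × (DE n → Bool) × (DE n × Bool → Bool)

instance instFintypeFlips : (n : ℕ) → Fintype (Flips n)
  | 0 => inferInstanceAs (Fintype Unit)
  | n + 1 => letI := instFintypeFlips n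
    inferInstanceAs (Fintype (Flips n × (DE n → Bool) × (DE n × Bool → Bool)))

instance instNonemptyFlips : (n : ℕ) → Nonempty (Flips n)
  | 0 => inferInstanceAs (Nonempty Unit)
  | n + 1 => letI := instNonemptyFlips n
    inferInstanceAs (Nonempty (Flips n × (DE n → Bool) × (DE n × Bool → Bool)))

def flipEquiv : (n : ℕ) → Flips n → DE n ≃ DE n
  | 0, _ => Equiv.refl _
  | n + 1, s => (flipEquiv n s.1).prodShear fun x => digitPerm (s.2.1 x) fun β => s.2.2 (x, β)

def evenRelabel : (n : ℕ) → Flips n → EvenIdx n ≃ EvenIdx n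
  | 0, _ => Equiv.refl _
  | n + 1, s => (evenRelabel n s.1).sumCongr (flipEquiv n s.1)

def evenSign : (n : ℕ) → Flips n → EvenIdx n → ℝ
  | 0, _, v => v.elim
  | n + 1, s, .inl v => evenSign n s.1 v
  | _ + 1, s, .inr v => boolSign (s.2.1 v)

def oddRelabel : (n : ℕ) → Flips n → OddIdx n → OddIdx n
  | 0, _, u => u.elim
  | n + 1, s, .inl u => .inl (oddRelabel n s.1 u)
  | n + 1, s, .inr w => .inr (flipEquiv n s.1 w.1, xor w.2 (s.2.1 w.1))

def oddSign : (n : ℕ) → Flips n → OddIdx n → ℝ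
  | 0, _, u => u.elim
  | n + 1, s, .inl u => oddSign n s.1 u
  | _ + 1, s, .inr w => boolSign (s.2.2 w)

variable {n : ℕ}

lemma flipEquiv_succ_symm_apply (s : Flips (n + 1)) (x : DE n) (i : Fin 4) :
    (flipEquiv (n + 1) s).symm (x, i) =
      ((flipEquiv n s.1).symm x, (digitPerm (s.2.1 ((flipEquiv n s.1).symm x))
        fun β => s.2.2 ((flipEquiv n s.1).symm x, β)).symm i) :=
  rfl

lemma evenRelabel_succ_inr (s : Flips (n + 1)) (v : DE n) :
    evenRelabel (n + 1) s (.inr v) = .inr (flipEquiv n s.1 v) :=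
  rfl

lemma evenSign_mul_self :
    ∀ (n : ℕ) (s : Flips n) (v : EvenIdx n), evenSign n s v * evenSign n s v = 1
  | 0, _, v => v.elim
  | n + 1, s, .inl v => evenSign_mul_self n s.1 v
  | _ + 1, _, .inr _ => boolSign_mul_self _

lemma evenNormSq_evenRelabel :
    ∀ (n : ℕ) (s : Flips n) (v : EvenIdx n), evenNormSq n (evenRelabel n s v) = evenNormSq n v
  | 0, _, v => v.elim
  | n + 1, s, .inl v => congrArg (4 * ·) (evenNormSq_evenRelabel n s.1 v)
  | _ + 1, _, .inr _ => rfl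

theorem evenHaar_flipEquiv_symm : ∀ (n : ℕ) (s : Flips n) (v : EvenIdx n) (x : DE n),
    evenHaar n v ((flipEquiv n s).symm x) = evenSign n s v * evenHaar n (evenRelabel n s v) x
  | 0, _, v, _ => v.elim
  | n + 1, s, .inl v, (x, _) => evenHaar_flipEquiv_symm n s.1 v x
  | n + 1, s, .inr v, (x, i) => by
    rw [flipEquiv_succ_symm_apply, evenRelabel_succ_inr]
    simp only [evenHaar_succ_inr, evenSign]
    by_cases hx : x = flipEquiv n s.1 v
    · simp [hx, quadPattern_digitPerm_symm]
    · have hx' : (flipEquiv n s.1).symm x ≠ v := fun h =>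
        hx (by rw [← h, Equiv.apply_symm_apply])
      simp [hx, hx']

theorem oddHaar_flipEquiv_symm : ∀ (n : ℕ) (s : Flips n) (u : OddIdx n) (x : DE n),
    oddHaar n u ((flipEquiv n s).symm x) = oddSign n s u * oddHaar n (oddRelabel n s u) x
  | 0, _, u, _ => u.elim
  | n + 1, s, .inl u, (x, _) => oddHaar_flipEquiv_symm n s.1 u x
  | n + 1, s, .inr (v, β), (x, i) => by
    rw [flipEquiv_succ_symm_apply]
    simp only [oddHaar_succ_inr, oddRelabel, oddSign]
    by_cases hx : x = flipEquiv n s.1 v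
    · simp [hx, sidePattern_digitPerm_symm]
    · have hx' : (flipEquiv n s.1).symm x ≠ v := fun h =>
        hx (by rw [← h, Equiv.apply_symm_apply])
      simp [hx, hx']

end Symmetries

section Cancellation

lemma sum_eq_zero_of_involutive_neg {α M : Type*} [Fintype α] [AddCommGroup M]
    [IsAddTorsionFree M] {f : α → M} {σ : α → α} (hσ : Function.Involutive σ)
    (hf : ∀ a, f (σ a) = -f a) : ∑ a, f a = 0 := by
  have h := Equiv.sum_comp (hσ.toPerm σ) f
  simp only [Function.Involutive.coe_toPerm, hf, Finset.sum_neg_distrib] at h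
  exact self_eq_neg.1 h.symm

def flipBit {α : Type*} [DecidableEq α] (f : α → Bool) (a : α) : α → Bool :=
  Function.update f a (!f a)

section FlipBit

variable {α : Type*} [DecidableEq α] (f : α → Bool) (a : α)

@[simp] lemma flipBit_self : flipBit f a a = !f a := Function.update_self ..

@[simp] lemma flipBit_flipBit : flipBit (flipBit f a) a = f := by
  rw [flipBit, flipBit_self, Bool.not_not, flipBit, Function.update_idem, Function.update_eq_self]

end FlipBit

def evenFlip : (n : ℕ) → EvenIdx n → Flips n → Flips n
  | 0, v, _ => v.elim
  | n + 1, .inl v, s => (evenFlip n v s.1, s.2)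
  | _ + 1, .inr v, s => (s.1, flipBit s.2.1 v, s.2.2)

-- The bit reversing `oddSign _ u` would relabel an even index `v` of a deeper level; for such `v`
-- the side bit of `v` is flipped instead.
def jointFlip : (n : ℕ) → EvenIdx n → OddIdx n → Flips n → Flips n
  | 0, v, _, _ => v.elim
  | n + 1, .inl v, .inl u, s => (jointFlip n v u s.1, s.2)
  | _ + 1, .inr v, .inl _, s => (s.1, flipBit s.2.1 v, s.2.2)
  | _ + 1, _, .inr w, s => (s.1, s.2.1, flipBit s.2.2 w)

theorem evenFlip_involutive : ∀ (n : ℕ) (v : EvenIdx n), Function.Involutive (evenFlip n v)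
  | 0, v, _ => v.elim
  | n + 1, .inl v, s => by
    show (evenFlip n v (evenFlip n v s.1), s.2) = s
    rw [evenFlip_involutive n v]
    rfl
  | _ + 1, .inr v, s => by
    show (s.1, flipBit (flipBit s.2.1 v) v, s.2.2) = s
    rw [flipBit_flipBit]
    rfl

theorem evenRelabel_evenFlip : ∀ (n : ℕ) (v : EvenIdx n) (s : Flips n),
    evenRelabel n (evenFlip n v s) v = evenRelabel n s v
  | 0, v, _ => v.elim
  | n + 1, .inl v, s => congrArg Sum.inl (evenRelabel_evenFlip n v s.1)
  | _ + 1, .inr _, _ => rfl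

theorem evenSign_evenFlip : ∀ (n : ℕ) (v : EvenIdx n) (s : Flips n),
    evenSign n (evenFlip n v s) v = -evenSign n s v
  | 0, v, _ => v.elim
  | n + 1, .inl v, s => evenSign_evenFlip n v s.1
  | _ + 1, .inr v, s => by
    show boolSign (flipBit s.2.1 v v) = _
    rw [flipBit_self, boolSign_not]
    rfl

theorem jointFlip_involutive :
    ∀ (n : ℕ) (v : EvenIdx n) (u : OddIdx n), Function.Involutive (jointFlip n v u)
  | 0, v, _, _ => v.elim
  | n + 1, .inl v, .inl u, s => by
    show (jointFlip n v u (jointFlip n v u s.1), s.2) = s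
    rw [jointFlip_involutive n v u]
    rfl
  | _ + 1, .inr v, .inl _, s => by
    show (s.1, flipBit (flipBit s.2.1 v) v, s.2.2) = s
    rw [flipBit_flipBit]
    rfl
  | _ + 1, .inl _, .inr w, s | _ + 1, .inr _, .inr w, s => by
    show (s.1, s.2.1, flipBit (flipBit s.2.2 w) w) = s
    rw [flipBit_flipBit]
    rfl

theorem evenRelabel_jointFlip : ∀ (n : ℕ) (v : EvenIdx n) (u : OddIdx n) (s : Flips n),
    evenRelabel n (jointFlip n v u s) v = evenRelabel n s v
  | 0, v, _, _ => v.elim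
  | n + 1, .inl v, .inl u, s => congrArg Sum.inl (evenRelabel_jointFlip n v u s.1)
  | _ + 1, .inr _, .inl _, _ | _ + 1, .inl _, .inr _, _ | _ + 1, .inr _, .inr _, _ => rfl

theorem oddRelabel_jointFlip : ∀ (n : ℕ) (v : EvenIdx n) (u : OddIdx n) (s : Flips n),
    oddRelabel n (jointFlip n v u s) u = oddRelabel n s u
  | 0, v, _, _ => v.elim
  | n + 1, .inl v, .inl u, s => congrArg Sum.inl (oddRelabel_jointFlip n v u s.1)
  | _ + 1, .inr _, .inl _, _ | _ + 1, .inl _, .inr _, _ | _ + 1, .inr _, .inr _, _ => rfl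

theorem evenSign_mul_oddSign_jointFlip : ∀ (n : ℕ) (v : EvenIdx n) (u : OddIdx n) (s : Flips n),
    evenSign n (jointFlip n v u s) v * oddSign n (jointFlip n v u s) u =
      -(evenSign n s v * oddSign n s u)
  | 0, v, _, _ => v.elim
  | n + 1, .inl v, .inl u, s => evenSign_mul_oddSign_jointFlip n v u s.1
  | _ + 1, .inr v, .inl _, s => by
    show boolSign (flipBit s.2.1 v v) * _ = _
    rw [flipBit_self, boolSign_not, neg_mul]
    rfl
  | _ + 1, .inl _, .inr w, s | _ + 1, .inr _, .inr w, s => by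
    show _ * boolSign (flipBit s.2.2 w w) = _
    rw [flipBit_self, boolSign_not, mul_neg]
    rfl

variable {n : ℕ}

theorem sum_evenSign_mul_eq_zero (v : EvenIdx n) (F : EvenIdx n → ℝ) :
    ∑ s, evenSign n s v * F (evenRelabel n s v) = 0 :=
  sum_eq_zero_of_involutive_neg (evenFlip_involutive n v) fun s => by
    rw [evenSign_evenFlip, evenRelabel_evenFlip, neg_mul]

theorem sum_evenSign_mul_oddSign_mul_eq_zero (v : EvenIdx n) (u : OddIdx n)
    (F : EvenIdx n → ℝ) (G : OddIdx n → ℝ) :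
    ∑ s, evenSign n s v * F (evenRelabel n s v) * (oddSign n s u * G (oddRelabel n s u)) = 0 :=
  sum_eq_zero_of_involutive_neg (jointFlip_involutive n v u) fun s => by
    rw [evenRelabel_jointFlip, oddRelabel_jointFlip]
    linear_combination F (evenRelabel n s v) * G (oddRelabel n s u) *
      evenSign_mul_oddSign_jointFlip n v u s

theorem sum_evenSign_mul_apply_flipEquiv_symm_eq_zero (v : EvenIdx n) (F : EvenIdx n → ℝ)
    {J : DE n → ℝ} (hJ : ∀ u, J ⬝ᵥ evenHaar n u = 0) (x : DE n) :
    ∑ s, evenSign n s v * F (evenRelabel n s v) * J ((flipEquiv n s).symm x) = 0 := by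
  set C := (∑ y, J y) / 4 ^ n
  set c := fun u => (J ⬝ᵥ oddHaar n u) / oddNormSq n u
  calc ∑ s, evenSign n s v * F (evenRelabel n s v) * J ((flipEquiv n s).symm x)
      = C * ∑ s, evenSign n s v * F (evenRelabel n s v)
        + ∑ u, c u * ∑ s, evenSign n s v * F (evenRelabel n s v) *
            (oddSign n s u * oddHaar n (oddRelabel n s u) x) := by
        simp only [Finset.mul_sum]
        rw [Finset.sum_comm, ← Finset.sum_add_distrib]
        refine Finset.sum_congr rfl fun s _ => ?_
        rw [eq_add_oddPart_of_orthogonal hJ, oddPart, mul_add, Finset.mul_sum]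
        simp only [oddHaar_flipEquiv_symm]
        congr 1
        · ring
        · exact Finset.sum_congr rfl fun u _ => by ring
    _ = 0 := by
        rw [sum_evenSign_mul_eq_zero, mul_zero, zero_add]
        exact Finset.sum_eq_zero fun u _ => mul_eq_zero_of_right _
          (sum_evenSign_mul_oddSign_mul_eq_zero v u F fun u' => oddHaar n u' x)

end Cancellation

section TestFunction

def baseEdge : (n : ℕ) → DE n
  | 0 => ()
  | n + 1 => (baseEdge n, 0)

def testFn : (n : ℕ) → DE n → ℝ
  | 0, _ => 1
  | n + 1, x => if x.1 = baseEdge n then quadPattern x.2 else testFn n x.1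

-- `⟨testFn, Q δ_baseEdge⟩` and `⟨δ_baseEdge, Q δ_baseEdge⟩`, with `Q` the orthogonal projection
-- onto the cycle space.
noncomputable def projValue (n : ℕ) : ℝ :=
  ∑ v, (testFn n ⬝ᵥ evenHaar n v) / evenNormSq n v * evenHaar n v (baseEdge n)

noncomputable def projDiag (n : ℕ) : ℝ :=
  ∑ v, evenHaar n v (baseEdge n) ^ 2 / evenNormSq n v

lemma abs_testFn_le_one : ∀ (n : ℕ) (x : DE n), |testFn n x| ≤ 1
  | 0, _ => by simp [testFn]
  | n + 1, (x, i) => by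
    by_cases hx : x = baseEdge n
    · simp only [testFn, hx, if_true]
      fin_cases i <;> simp [quadPattern]
    · simpa [testFn, hx] using abs_testFn_le_one n x

lemma testFn_baseEdge : ∀ n, testFn n (baseEdge n) = 1
  | 0 => rfl
  | n + 1 => by simp [testFn, baseEdge, quadPattern]

variable {n : ℕ}

lemma sum_testFn_succ (y : DE n) :
    ∑ i, testFn (n + 1) (y, i) =
      4 * (testFn n y - (Pi.single (baseEdge n) 1 : DE n → ℝ) y) := by
  by_cases hy : y = baseEdge n
  · simp [testFn, hy, testFn_baseEdge, Fin.sum_univ_four, quadPattern]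
  · simp [testFn, hy]

lemma evenHaar_succ_inr_baseEdge (v : DE n) :
    evenHaar (n + 1) (.inr v) (baseEdge (n + 1)) = if v = baseEdge n then 1 else 0 := by
  simp [baseEdge, evenHaar_succ_inr, quadPattern, eq_comm]

lemma testFn_dotProduct_evenHaar_inl (v : EvenIdx n) :
    testFn (n + 1) ⬝ᵥ evenHaar (n + 1) (.inl v) =
      4 * (testFn n ⬝ᵥ evenHaar n v) - 4 * evenHaar n v (baseEdge n) := by
  have hsum : (fun y => ∑ i, testFn (n + 1) (y, i)) =
      (4 : ℝ) • (testFn n - Pi.single (baseEdge n) (1 : ℝ)) := by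
    ext y; simp [sum_testFn_succ]
  rw [dotProduct_evenHaar_inl, hsum, smul_dotProduct, sub_dotProduct, single_dotProduct,
    smul_eq_mul]
  ring

lemma testFn_dotProduct_evenHaar_inr (v : DE n) :
    testFn (n + 1) ⬝ᵥ evenHaar (n + 1) (.inr v) = if v = baseEdge n then 4 else 0 := by
  rw [dotProduct_evenHaar_inr]
  by_cases hv : v = baseEdge n
  · simp only [testFn, hv, if_true, quadPattern, Fin.sum_univ_four, Fin.isValue,
      Matrix.cons_val_zero, Matrix.cons_val_one, Matrix.cons_val, mul_one, mul_neg, neg_neg]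
    norm_num
  · simp [testFn, hv, Fin.sum_univ_four, quadPattern]

lemma projDiag_succ (n : ℕ) : projDiag (n + 1) = projDiag n / 4 + 1 / 4 := by
  rw [projDiag, sum_evenIdx_succ, projDiag, Finset.sum_div]
  congr 1
  · refine Finset.sum_congr rfl fun v _ => ?_
    simp only [evenNormSq, baseEdge, evenHaar_succ_inl]
    ring
  · simp [evenHaar_succ_inr_baseEdge, evenNormSq, ite_div]

lemma projValue_succ (n : ℕ) : projValue (n + 1) = projValue n - projDiag n + 1 := by
  rw [projValue, sum_evenIdx_succ, projValue, projDiag, ← Finset.sum_sub_distrib]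
  congr 1
  · refine Finset.sum_congr rfl fun v _ => ?_
    simp only [testFn_dotProduct_evenHaar_inl, evenNormSq, baseEdge, evenHaar_succ_inl]
    rw [← mul_sub, mul_div_mul_left _ _ four_ne_zero]
    ring
  · simp [testFn_dotProduct_evenHaar_inr, evenHaar_succ_inr_baseEdge, evenNormSq]

lemma projDiag_eq : ∀ n, projDiag n = (1 - (1 / 4) ^ n) / 3
  | 0 => by simp [projDiag, Finset.sum_eq_zero (fun (v : EvenIdx 0) _ => v.elim)]
  | n + 1 => by rw [projDiag_succ, projDiag_eq n, pow_succ]; ring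

lemma projValue_eq : ∀ n : ℕ, projValue n = 2 * n / 3 + 4 / 9 - 4 / 9 * (1 / 4) ^ n
  | 0 => by simp [projValue, Finset.sum_eq_zero (fun (v : EvenIdx 0) _ => v.elim)]
  | n + 1 => by
    rw [projValue_succ, projValue_eq n, projDiag_eq, pow_succ]
    push_cast
    ring

end TestFunction

section Averaging

variable {n : ℕ}

def defect (M : Matrix (DE n) (DE n) ℝ) (v : EvenIdx n) : DE n → ℝ :=
  evenHaar n v ᵥ* M - evenHaar n v

lemma defect_dotProduct_evenHaar {M : Matrix (DE n) (DE n) ℝ}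
    (hfix : ∀ u, M *ᵥ evenHaar n u = evenHaar n u) (v u : EvenIdx n) :
    defect M v ⬝ᵥ evenHaar n u = 0 := by
  rw [defect, sub_dotProduct, ← dotProduct_mulVec, hfix, sub_self]

lemma transpose_dotProduct_evenHaar (M : Matrix (DE n) (DE n) ℝ) (y : DE n) (v : EvenIdx n) :
    Mᵀ y ⬝ᵥ evenHaar n v = evenHaar n v y + defect M v y := by
  simp only [defect, Pi.sub_apply, add_sub_cancel]
  exact dotProduct_comm _ _

def conjPairing (M : Matrix (DE n) (DE n) ℝ) (s : Flips n) : ℝ :=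
  ∑ e, testFn n e * M ((flipEquiv n s).symm e) ((flipEquiv n s).symm (baseEdge n))

theorem conjPairing_le (M : Matrix (DE n) (DE n) ℝ) {K : ℝ} (hK : ∀ y, ∑ e, |M e y| ≤ K)
    (s : Flips n) : conjPairing M s ≤ K := by
  set g := (flipEquiv n s).symm
  calc conjPairing M s
      ≤ ∑ e, |M (g e) (g (baseEdge n))| := Finset.sum_le_sum fun e _ =>
        (le_abs_self _).trans <| by
          rw [abs_mul]; exact mul_le_of_le_one_left (abs_nonneg _) (abs_testFn_le_one n e)
    _ = ∑ e, |M e (g (baseEdge n))| := Equiv.sum_comp g fun e => |M e (g (baseEdge n))|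
    _ ≤ K := hK _

theorem conjPairing_eq {M : Matrix (DE n) (DE n) ℝ} (hcol : ∀ y, Mᵀ y ∈ cycleSpace n)
    (s : Flips n) :
    conjPairing M s =
      ∑ v, evenSign n s v * (testFn n ⬝ᵥ evenHaar n (evenRelabel n s v)) / evenNormSq n v *
        (evenHaar n v ((flipEquiv n s).symm (baseEdge n)) +
          defect M v ((flipEquiv n s).symm (baseEdge n))) := by
  unfold conjPairing
  set y := (flipEquiv n s).symm (baseEdge n)
  have hexp (e : DE n) : M ((flipEquiv n s).symm e) y =
      ∑ v, (evenHaar n v y + defect M v y) / evenNormSq n v *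
        (evenSign n s v * evenHaar n (evenRelabel n s v) e) := by
    rw [← Matrix.transpose_apply M y, eq_evenPart_of_mem_cycleSpace (hcol y), evenPart]
    simp only [transpose_dotProduct_evenHaar, evenHaar_flipEquiv_symm]
  simp only [hexp, Finset.mul_sum]
  rw [Finset.sum_comm]
  refine Finset.sum_congr rfl fun v _ => ?_
  rw [dotProduct, Finset.mul_sum, Finset.sum_div, Finset.sum_mul]
  exact Finset.sum_congr rfl fun e _ => by ring

theorem sum_mainTerm_eq_projValue (s : Flips n) :
    ∑ v, evenSign n s v * (testFn n ⬝ᵥ evenHaar n (evenRelabel n s v)) / evenNormSq n v *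
      evenHaar n v ((flipEquiv n s).symm (baseEdge n)) = projValue n := by
  rw [projValue, ← Equiv.sum_comp (evenRelabel n s) fun v =>
    (testFn n ⬝ᵥ evenHaar n v) / evenNormSq n v * evenHaar n v (baseEdge n)]
  refine Finset.sum_congr rfl fun v _ => ?_
  rw [evenHaar_flipEquiv_symm, evenNormSq_evenRelabel]
  linear_combination (testFn n ⬝ᵥ evenHaar n (evenRelabel n s v)) / evenNormSq n v *
    evenHaar n (evenRelabel n s v) (baseEdge n) * evenSign_mul_self n s v

theorem sum_conjPairing {M : Matrix (DE n) (DE n) ℝ} (hcol : ∀ y, Mᵀ y ∈ cycleSpace n)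
    (hfix : ∀ v, M *ᵥ evenHaar n v = evenHaar n v) :
    ∑ s, conjPairing M s = Fintype.card (Flips n) • projValue n := by
  have hdefect (v : EvenIdx n) :
      ∑ s, evenSign n s v * (testFn n ⬝ᵥ evenHaar n (evenRelabel n s v)) *
        defect M v ((flipEquiv n s).symm (baseEdge n)) = 0 :=
    sum_evenSign_mul_apply_flipEquiv_symm_eq_zero v (testFn n ⬝ᵥ evenHaar n ·)
      (defect_dotProduct_evenHaar hfix v) _
  simp only [conjPairing_eq hcol, mul_add, Finset.sum_add_distrib, sum_mainTerm_eq_projValue,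
    Finset.sum_const, Finset.card_univ]
  rw [Finset.sum_comm, add_eq_left]
  refine Finset.sum_eq_zero fun v _ => ?_
  simp only [div_mul_eq_mul_div, ← Finset.sum_div, hdefect v, zero_div]

theorem projValue_le {M : Matrix (DE n) (DE n) ℝ} (hcol : ∀ y, Mᵀ y ∈ cycleSpace n)
    (hfix : ∀ v, M *ᵥ evenHaar n v = evenHaar n v) {K : ℝ} (hK : ∀ y, ∑ e, |M e y| ≤ K) :
    projValue n ≤ K := by
  have hbound := Finset.sum_le_card_nsmul Finset.univ _ K fun s _ => conjPairing_le M hK s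
  rw [sum_conjPairing hcol hfix, Finset.card_univ] at hbound
  exact le_of_nsmul_le_nsmul_right Fintype.card_ne_zero hbound

end Averaging

end DiamondGraph

open DiamondGraph

theorem stmt13 (n : ℕ) (hn : 1 ≤ n)
    (P : (DE n → ℝ) →ₗ[ℝ] (DE n → ℝ))
    (hP1 : ∀ f, P f ∈ cycleSpace n) (hP2 : ∀ f ∈ cycleSpace n, P f = f)
    (K : ℝ) (hK : ∀ f, e1norm (P f) ≤ K * e1norm f) :
    (2 * n + 1 : ℝ) / 3 ≤ K := by
  set M := LinearMap.toMatrix' P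
  have hcol (y : DE n) : Mᵀ y = P (Pi.single y 1) := by
    ext e; simp [M, LinearMap.toMatrix'_apply]
  have hnorm (y : DE n) : ∑ e, |M e y| ≤ K := by
    have h := hK (Pi.single y 1)
    simpa [e1norm, ← hcol, Pi.single_apply, apply_ite] using h
  have hvalue := projValue_le (fun y => hcol y ▸ hP1 _)
    (fun v => by rw [LinearMap.toMatrix'_mulVec, hP2 _ (evenHaar_mem_cycleSpace n v)]) hnorm
  have hpow : (1 / 4 : ℝ) ^ n ≤ 1 / 4 := pow_le_of_le_one (by norm_num) (by norm_num) (by omega)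
  rw [projValue_eq] at hvalue
  linarith
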